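/- arXiv:2006.09576 — 2 statements merged into one kernel-verified Lean document; each statement's English description precedes it below -/
import Mathlib

section
/- Let X be a compact Priestley space and let φ : X → X be a homeomorphism that is involutive (φ(φ(x)) = x for all x) and order-reversing (x ≤ y implies φ(y) ≤ φ(x)). Assume X is φ-connected, i.e. the only nonempty subset of X that is simultaneously an upper set, a lower set, and φ-invariant is X itself. If Y ⊆ X is nonempty, closed, φ-invariant (φ(y) ∈ Y for all y ∈ Y), and satisfies Max(X) ∩ ↑Y ⊆ Y (every maximal element lying above some element of Y belongs to Y), then Max(X) ∪ Min(X) ⊆ Y. -/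
/-!
Every point lies below a maximal point (Zorn's lemma: principal up-sets are closed, so a chain
has an upper bound by compactness) and, applying `φ`, above a minimal point. Since `φ` swaps
maximal and minimal points, `Y` also contains every minimal point below it. Consequently the
up-closure and the down-closure of `Y` coincide; this set is upper, lower and `φ`-invariant,
hence all of `X` by `φ`-connectedness, and every maximal or minimal point lies above or below
a point of `Y`.
-/

open Set

instance PriestleySpace.toClosedIciTopology {α : Type*} [TopologicalSpace α] [Preorder α]
    [PriestleySpace α] : ClosedIciTopology α where
  isClosed_Ici y := by
    refine isOpen_compl_iff.1 <| isOpen_iff_forall_mem_open.2 fun z hz => ?_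
    obtain ⟨U, hU, hUup, hyU, hzU⟩ := exists_isClopen_upper_of_not_le hz
    exact ⟨Uᶜ, fun w hw hyw => hw (hUup hyw hyU), hU.compl.isOpen, hzU⟩

theorem CompactSpace.exists_le_isMax {α : Type*} [TopologicalSpace α] [Preorder α]
    [ClosedIciTopology α] [CompactSpace α] (x : α) : ∃ m, x ≤ m ∧ IsMax m := by
  refine zorn_le_nonempty_Ici₀ x (fun c _ hc y hy => ?_) x le_rfl
  have : Nonempty c := ⟨⟨y, hy⟩⟩
  -- a chain of nonempty closed sets `Ici z` in a compact space has a common point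
  obtain ⟨ub, hub⟩ := IsCompact.nonempty_iInter_of_directed_nonempty_isCompact_isClosed
    (fun z : c => Ici (z : α))
    ((hc.directed (f := id)).mono_comp (· ≤ ·) (g := Ici) fun _ _ h => Ici_subset_Ici.2 h)
    (fun z => nonempty_Ici) (fun _ => isClosed_Ici.isCompact) (fun _ => isClosed_Ici)
  exact ⟨ub, fun z hz => mem_iInter.1 hub ⟨z, hz⟩⟩

section AntitoneInvolution

variable {α : Type*} [Preorder α] {φ : α → α} {x : α}

theorem Antitone.isMin_apply_of_isMax (hφ : Antitone φ) (hinv : Function.Involutive φ)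
    (hx : IsMax x) : IsMin (φ x) := fun z hz =>
  (hφ (hx (hinv x ▸ hφ hz))).trans_eq (hinv z)

theorem Antitone.isMax_apply_of_isMin (hφ : Antitone φ) (hinv : Function.Involutive φ)
    (hx : IsMin x) : IsMax (φ x) := fun z hz =>
  (hinv z).symm.trans_le (hφ (hx (hinv x ▸ hφ hz)))

theorem Antitone.exists_isMin_le (hφ : Antitone φ) (hinv : Function.Involutive φ)
    (hmax : ∀ y : α, ∃ m, y ≤ m ∧ IsMax m) (x : α) : ∃ n, n ≤ x ∧ IsMin n := by
  obtain ⟨m, hxm, hm⟩ := hmax (φ x)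
  exact ⟨φ m, hinv x ▸ hφ hxm, hφ.isMin_apply_of_isMax hinv hm⟩

end AntitoneInvolution

theorem coe_upperClosure_eq_lowerClosure_of_extremal {α : Type*} [Preorder α] {s : Set α}
    (hmax : ∀ x : α, ∃ m, x ≤ m ∧ IsMax m) (hmin : ∀ x : α, ∃ n, n ≤ x ∧ IsMin n)
    (hs_max : ∀ m, IsMax m → m ∈ upperClosure s → m ∈ s)
    (hs_min : ∀ n, IsMin n → n ∈ lowerClosure s → n ∈ s) :
    (upperClosure s : Set α) = lowerClosure s := by
  ext x
  constructor
  · rintro ⟨y, hy, hyx⟩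
    obtain ⟨m, hxm, hm⟩ := hmax x
    exact ⟨m, hs_max m hm ⟨y, hy, hyx.trans hxm⟩, hxm⟩
  · rintro ⟨y, hy, hxy⟩
    obtain ⟨n, hnx, hn⟩ := hmin x
    exact ⟨n, hs_min n hn ⟨y, hy, hnx.trans hxy⟩, hnx⟩

theorem csubset_contains_max_and_min_general {X : Type*} [TopologicalSpace X] [PartialOrder X]
    [PriestleySpace X] [CompactSpace X] (φ : X ≃ₜ X)
    (hinv : ∀ x, φ (φ x) = x) (hrev : ∀ x y : X, x ≤ y → φ y ≤ φ x)
    (hconn : ∀ S : Set X, S.Nonempty → IsUpperSet S → IsLowerSet S →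
      (∀ x ∈ S, φ x ∈ S) → S = Set.univ)
    (Y : Set X) (hYne : Y.Nonempty)
    (hYinv : ∀ y ∈ Y, φ y ∈ Y)
    (hYmax : {x : X | IsMax x} ∩ {x : X | ∃ y ∈ Y, y ≤ x} ⊆ Y) :
    {x : X | IsMax x} ∪ {x : X | IsMin x} ⊆ Y := by
  have hφ : Antitone φ := fun x y => hrev x y
  have hmax : ∀ x : X, ∃ m, x ≤ m ∧ IsMax m := CompactSpace.exists_le_isMax
  have hYmin (n : X) (hn : IsMin n) : n ∈ lowerClosure Y → n ∈ Y := by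
    rintro ⟨y, hy, hny⟩
    simpa only [hinv] using
      hYinv _ (hYmax ⟨hφ.isMax_apply_of_isMin hinv hn, φ y, hYinv y hy, hφ hny⟩)
  have hclosure : (upperClosure Y : Set X) = lowerClosure Y :=
    coe_upperClosure_eq_lowerClosure_of_extremal hmax (hφ.exists_isMin_le hinv hmax)
      (fun m hm hmY => hYmax ⟨hm, hmY⟩) hYmin
  have hup : ∀ x, x ∈ upperClosure Y := by
    refine eq_univ_iff_forall.1 <| hconn _ (hYne.mono subset_upperClosure) (upperClosure Y).upper
      (hclosure ▸ (lowerClosure Y).lower) ?_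
    rintro x ⟨y, hy, hyx⟩
    exact hclosure ▸ ⟨φ y, hYinv y hy, hφ hyx⟩
  rintro x (hx | hx)
  · exact hYmax ⟨hx, hup x⟩
  · exact hYmin x hx (hclosure.subset (hup x))

theorem csubset_contains_max_and_min {X : Type*} [TopologicalSpace X] [PartialOrder X]
    [PriestleySpace X] [CompactSpace X] (φ : X ≃ₜ X)
    (hinv : ∀ x, φ (φ x) = x) (hrev : ∀ x y : X, x ≤ y → φ y ≤ φ x)
    (hconn : ∀ S : Set X, S.Nonempty → IsUpperSet S → IsLowerSet S →
      (∀ x ∈ S, φ x ∈ S) → S = Set.univ)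
    (Y : Set X) (hYne : Y.Nonempty) (hYcl : IsClosed Y)
    (hYinv : ∀ y ∈ Y, φ y ∈ Y)
    (hYmax : {x : X | IsMax x} ∩ {x : X | ∃ y ∈ Y, y ≤ x} ⊆ Y) :
    {x : X | IsMax x} ∪ {x : X | IsMin x} ⊆ Y :=
  csubset_contains_max_and_min_general φ hinv hrev hconn Y hYne hYinv hYmax
end

section
/- Let L be a pm-algebra with 0 ≠ 1 whose prime filter space is φ-connected. Then L is simple if and only if every prime filter of L is maximal or minimal (with respect to inclusion among prime filters). -/
/-- A pseudocomplemented De Morgan algebra (pm-algebra): a bounded distributive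
lattice with a De Morgan involution `dm` and a pseudocomplement `pc`. -/
class PMAlgebra (L : Type*) extends DistribLattice L, BoundedOrder L where
  dm : L → L
  pc : L → L
  dm_dm : ∀ a : L, dm (dm a) = a
  dm_inf : ∀ a b : L, dm (a ⊓ b) = dm a ⊔ dm b
  pc_iff : ∀ a b : L, a ⊓ b = ⊥ ↔ b ≤ pc a

namespace PMAlgebra

variable {L : Type*} [PMAlgebra L]

/-- A congruence of a pm-algebra. -/
def IsCongruence (θ : L → L → Prop) : Prop :=
  Equivalence θ ∧
  (∀ a b c d : L, θ a b → θ c d → θ (a ⊓ c) (b ⊓ d)) ∧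
  (∀ a b c d : L, θ a b → θ c d → θ (a ⊔ c) (b ⊔ d)) ∧
  (∀ a b : L, θ a b → θ (dm a) (dm b)) ∧
  (∀ a b : L, θ a b → θ (pc a) (pc b))

/-- `L` is simple: it has more than one element and its only congruences are
equality and the total relation. -/
def Simple (L : Type*) [PMAlgebra L] : Prop :=
  Nontrivial L ∧ ∀ θ : L → L → Prop, IsCongruence θ →
    θ = (fun a b => a = b) ∨ θ = (fun _ _ => True)

/-- `L` is subdirectly irreducible: there is a congruence `μ ≠ Eq` contained in
every congruence different from equality. -/
def SubdirectlyIrreducible (L : Type*) [PMAlgebra L] : Prop :=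
  ∃ μ : L → L → Prop, IsCongruence μ ∧ μ ≠ (fun a b => a = b) ∧
    ∀ θ : L → L → Prop, IsCongruence θ → θ ≠ (fun a b => a = b) →
      ∀ a b : L, μ a b → θ a b

/-- A prime filter of the underlying lattice of `L`. -/
def IsPrimeFilter (P : Set L) : Prop :=
  P.Nonempty ∧ P ≠ Set.univ ∧
  (∀ a b : L, a ∈ P → a ≤ b → b ∈ P) ∧
  (∀ a b : L, a ∈ P → b ∈ P → a ⊓ b ∈ P) ∧
  (∀ a b : L, a ⊔ b ∈ P → a ∈ P ∨ b ∈ P)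

/-- The Birula–Rasiowa transformation. -/
def phi (P : Set L) : Set L := {a : L | dm a ∉ P}

/-- `P` is a maximal prime filter. -/
def IsMaximalPF (P : Set L) : Prop :=
  IsPrimeFilter P ∧ ∀ Q : Set L, IsPrimeFilter Q → P ⊆ Q → Q = P

/-- `P` is a minimal prime filter. -/
def IsMinimalPF (P : Set L) : Prop :=
  IsPrimeFilter P ∧ ∀ Q : Set L, IsPrimeFilter Q → Q ⊆ P → Q = P

/-- The body of `L`: prime filters that are neither maximal nor minimal. -/
def body (L : Type*) [PMAlgebra L] : Set (Set L) :=
  {P : Set L | IsPrimeFilter P ∧ ¬ IsMaximalPF P ∧ ¬ IsMinimalPF P}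

/-- The prime filter space of `L` is φ-connected. -/
def PhiConnected (L : Type*) [PMAlgebra L] : Prop :=
  ∀ S : Set (Set L), S ⊆ {P : Set L | IsPrimeFilter P} → S.Nonempty →
    (∀ P Q : Set L, P ∈ S → IsPrimeFilter Q → P ⊆ Q → Q ∈ S) →
    (∀ P Q : Set L, P ∈ S → IsPrimeFilter Q → Q ⊆ P → Q ∈ S) →
    (∀ P : Set L, P ∈ S → phi P ∈ S) →
    S = {P : Set L | IsPrimeFilter P}

/-- The Kleene identity. -/
def Kleene (L : Type*) [PMAlgebra L] : Prop :=
  ∀ a b : L, a ⊓ dm a ≤ b ⊔ dm b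

/-- The term `C(x) = (x ∧ x') ∨ (x ∧ x')*`. -/
def C (x : L) : L := (x ⊓ dm x) ⊔ pc (x ⊓ dm x)

/-- The term `T(x) = C(x) ∧ C(x)'`. -/
def T (x : L) : L := C x ⊓ dm (C x)

end PMAlgebra

open PMAlgebra


/-!
If every prime filter is maximal or minimal, let `θ` be a congruence other than the total one.
Pulling back a prime filter of the quotient lattice `L/θ` gives a `θ`-saturated prime filter.
Saturation passes from a prime filter `P` to a strictly larger one `Q`: then `Q` is maximal, so
`y ∉ Q` forces `y* ∈ Q`, and if `x θ y` with `x ∈ Q` then `x ∧ y* θ 0`, so `(x ∧ y*)* θ 1` lies in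
`P ⊆ Q`, which puts `0` in `Q`. Saturation also passes through `φ`, hence (as `φ` reverses
inclusion) down to smaller prime filters. By φ-connectedness every prime filter is `θ`-saturated,
so `θ` is equality.

Conversely, agreement on all maximal and minimal prime filters is a congruence (`φ` swaps the two
kinds, and `x* ∈ Q` iff `x` lies in no maximal prime filter above `Q`). If `P` is neither maximal
nor minimal, there are `a, b` with `a ∨ a* ∉ P` and `c := (b ∨ b*)' ∈ P`. Every maximal prime filter
contains `a ∨ a*` and no minimal one contains `c`, so `c ∧ (a ∨ a*)` and `c` are identified although
they differ, and the congruence is neither equality nor total.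
-/

theorem inf_eq_inf_of_le {α : Type*} [SemilatticeInf α] {a b p q : α} (h : a ⊓ q = b ⊓ q)
    (hpq : p ≤ q) : a ⊓ p = b ⊓ p := by
  rw [← inf_eq_right.mpr hpq, ← inf_assoc, h, inf_assoc]

namespace LatticeCon

variable {α : Type*} [DistribLattice α]

/-- A type synonym, so that the preorder `Mathlib` puts on every `Quotient` does not clash with
the lattice order. -/
def Quotient (c : LatticeCon α) : Type _ := _root_.Quotient c.toSetoid

def toQuotient (c : LatticeCon α) : α → c.Quotient := _root_.Quotient.mk _

variable (c : LatticeCon α)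

instance : Max c.Quotient := ⟨_root_.Quotient.map₂ (· ⊔ ·) fun _ _ h _ _ h' => c.sup h h'⟩

instance : Min c.Quotient := ⟨_root_.Quotient.map₂ (· ⊓ ·) fun _ _ h _ _ h' => c.inf h h'⟩

instance : DistribLattice c.Quotient :=
  @DistribLattice.ofInfSupLe _
    (Lattice.mk'
      (by rintro ⟨a⟩ ⟨b⟩; exact congrArg _ (sup_comm a b))
      (by rintro ⟨a⟩ ⟨b⟩ ⟨d⟩; exact congrArg _ (sup_assoc a b d))
      (by rintro ⟨a⟩ ⟨b⟩; exact congrArg _ (inf_comm a b))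
      (by rintro ⟨a⟩ ⟨b⟩ ⟨d⟩; exact congrArg _ (inf_assoc a b d))
      (by rintro ⟨a⟩ ⟨b⟩; exact congrArg _ (sup_inf_self (a := a) (b := b)))
      (by rintro ⟨a⟩ ⟨b⟩; exact congrArg _ (inf_sup_self (a := a) (b := b))))
    (by rintro ⟨a⟩ ⟨b⟩ ⟨d⟩; exact congrArg c.toQuotient (sup_eq_right.mpr (inf_sup_left a b d).le))

variable {c}

theorem toQuotient_eq_toQuotient {a b : α} : c.toQuotient a = c.toQuotient b ↔ c.r a b :=
  _root_.Quotient.eq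

theorem toQuotient_le_toQuotient {a b : α} : c.toQuotient a ≤ c.toQuotient b ↔ c.r (a ⊔ b) b :=
  sup_eq_right.symm.trans toQuotient_eq_toQuotient

theorem toQuotient_monotone : Monotone c.toQuotient := fun a b h => by
  rw [toQuotient_le_toQuotient, sup_eq_right.mpr h]

def ofInfClosed {s : Set α} (hne : s.Nonempty) (hs : InfClosed s) : LatticeCon α where
  r a b := ∃ q ∈ s, a ⊓ q = b ⊓ q
  iseqv :=
    { refl := fun _ => ⟨hne.some, hne.some_mem, rfl⟩
      symm := fun ⟨q, hq, h⟩ => ⟨q, hq, h.symm⟩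
      trans := fun ⟨q, hq, h⟩ ⟨q', hq', h'⟩ => ⟨q ⊓ q', hs hq hq',
        (inf_eq_inf_of_le h inf_le_left).trans (inf_eq_inf_of_le h' inf_le_right)⟩ }
  inf := fun ⟨q, hq, h⟩ ⟨q', hq', h'⟩ => ⟨q ⊓ q', hs hq hq', by
    rw [inf_inf_distrib_right _ _ (q ⊓ q'), inf_inf_distrib_right _ _ (q ⊓ q'),
      inf_eq_inf_of_le h inf_le_left, inf_eq_inf_of_le h' inf_le_right]⟩
  sup := fun ⟨q, hq, h⟩ ⟨q', hq', h'⟩ => ⟨q ⊓ q', hs hq hq', by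
    rw [inf_sup_right, inf_sup_right, inf_eq_inf_of_le h inf_le_left,
      inf_eq_inf_of_le h' inf_le_right]⟩

end LatticeCon

namespace PMAlgebra

def Saturated {α : Type*} (r : α → α → Prop) (S : Set α) : Prop :=
  ∀ a b, r a b → a ∈ S → b ∈ S

variable {L : Type*} [PMAlgebra L]

theorem inf_pc_self (a : L) : a ⊓ pc a = ⊥ := (pc_iff a (pc a)).mpr le_rfl

theorem pc_bot : pc (⊥ : L) = ⊤ := top_le_iff.mp ((pc_iff ⊥ ⊤).mp (bot_inf_eq ⊤))

theorem dm_antitone : Antitone (dm : L → L) := fun a b h =>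
  calc dm b ≤ dm a ⊔ dm b := le_sup_right
    _ = dm a := by rw [← dm_inf, inf_eq_left.mpr h]

theorem dm_sup (a b : L) : dm (a ⊔ b) = dm a ⊓ dm b := by
  rw [← dm_dm (dm a ⊓ dm b), dm_inf, dm_dm, dm_dm]

namespace IsPrimeFilter

variable {P : Set L} (hP : IsPrimeFilter P)
include hP

theorem mem_of_le {a b : L} (ha : a ∈ P) (h : a ≤ b) : b ∈ P := hP.2.2.1 a b ha h

theorem inf_mem_iff {a b : L} : a ⊓ b ∈ P ↔ a ∈ P ∧ b ∈ P :=
  ⟨fun h => ⟨hP.mem_of_le h inf_le_left, hP.mem_of_le h inf_le_right⟩,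
    fun h => hP.2.2.2.1 a b h.1 h.2⟩

theorem sup_mem_iff {a b : L} : a ⊔ b ∈ P ↔ a ∈ P ∨ b ∈ P :=
  ⟨hP.2.2.2.2 a b, fun h => h.elim (hP.mem_of_le · le_sup_left) (hP.mem_of_le · le_sup_right)⟩

theorem top_mem : (⊤ : L) ∈ P := hP.1.elim fun _ ha => hP.mem_of_le ha le_top

theorem bot_notMem : (⊥ : L) ∉ P := fun h =>
  hP.2.1 (Set.eq_univ_of_forall fun _ => hP.mem_of_le h bot_le)

theorem pc_notMem {a : L} (ha : a ∈ P) : pc a ∉ P := fun h =>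
  hP.bot_notMem (inf_pc_self a ▸ hP.inf_mem_iff.mpr ⟨ha, h⟩)

end IsPrimeFilter

theorem mem_phi {P : Set L} {a : L} : a ∈ phi P ↔ dm a ∉ P := Iff.rfl

theorem phi_phi (P : Set L) : phi (phi P) = P := by
  ext a
  simp only [mem_phi, dm_dm, not_not]

theorem phi_subset_phi {P Q : Set L} (h : P ⊆ Q) : phi Q ⊆ phi P := fun _ ha hm => ha (h hm)

theorem IsPrimeFilter.phi {P : Set L} (hP : IsPrimeFilter P) : IsPrimeFilter (phi P) := by
  refine ⟨?_, ?_, fun a b ha hab hb => ha (hP.mem_of_le hb (dm_antitone hab)), ?_, ?_⟩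
  · obtain ⟨z, hz⟩ := (Set.ne_univ_iff_exists_notMem P).mp hP.2.1
    exact ⟨dm z, by rwa [mem_phi, dm_dm]⟩
  · obtain ⟨z, hz⟩ := hP.1
    exact (Set.ne_univ_iff_exists_notMem _).mpr ⟨dm z, by rwa [mem_phi, dm_dm, not_not]⟩
  · intro a b ha hb hab
    rw [dm_inf, hP.sup_mem_iff] at hab
    exact hab.elim ha hb
  · intro a b hab
    rw [mem_phi, dm_sup, hP.inf_mem_iff, not_and_or] at hab
    exact hab

theorem IsMaximalPF.phi {P : Set L} (hP : IsMaximalPF P) : IsMinimalPF (phi P) :=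
  ⟨hP.1.phi, fun Q hQ hQP => by
    rw [← phi_phi Q, hP.2 _ hQ.phi (phi_phi P ▸ phi_subset_phi hQP)]⟩

theorem IsMinimalPF.phi {P : Set L} (hP : IsMinimalPF P) : IsMaximalPF (phi P) :=
  ⟨hP.1.phi, fun Q hQ hPQ => by
    rw [← phi_phi Q, hP.2 _ hQ.phi (phi_phi P ▸ phi_subset_phi hPQ)]⟩

theorem exists_saturated_isPrimeFilter (c : LatticeCon L) {x y : L} (hxy : ¬ c.r (x ⊔ y) y) :
    ∃ P : Set L, IsPrimeFilter P ∧ Saturated c.r P ∧ x ∈ P ∧ y ∉ P := by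
  open Order in
  have hdisj : Disjoint (PFilter.principal (c.toQuotient x) : Set c.Quotient)
      (Ideal.principal (c.toQuotient y)) :=
    Set.disjoint_left.mpr fun _ hx hy =>
      hxy (LatticeCon.toQuotient_le_toQuotient.mp (le_trans hx (Ideal.mem_principal.mp hy)))
  obtain ⟨J, hJ, hyJ, hxJ⟩ := DistribLattice.prime_ideal_of_disjoint_filter_ideal hdisj
  have hxP : c.toQuotient x ∉ J := Set.disjoint_left.mp hxJ (PFilter.mem_principal.mpr le_rfl)
  have hyP : c.toQuotient y ∈ J := hyJ Ideal.mem_principal_self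
  refine ⟨{a | c.toQuotient a ∉ J}, ⟨⟨x, hxP⟩, ?_, ?_, ?_, ?_⟩, ?_, hxP, not_not.mpr hyP⟩
  · exact (Set.ne_univ_iff_exists_notMem _).mpr ⟨y, not_not.mpr hyP⟩
  · exact fun a b ha hab hb => ha (J.lower (LatticeCon.toQuotient_monotone hab) hb)
  · exact fun a b ha hb hab => (hJ.mem_or_mem hab).elim ha hb
  · intro a b hab
    by_contra! h
    exact hab (J.sup_mem (not_not.mp h.1) (not_not.mp h.2))
  · intro a b hab ha hb
    exact ha (LatticeCon.toQuotient_eq_toQuotient.mpr hab ▸ hb)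

theorem exists_isPrimeFilter_of_not_le {x y : L} (hxy : ¬ x ≤ y) :
    ∃ P : Set L, IsPrimeFilter P ∧ x ∈ P ∧ y ∉ P := by
  obtain ⟨P, hP, -, hx, hy⟩ :=
    exists_saturated_isPrimeFilter (LatticeCon.ker (LatticeHom.id L)) (x := x) (y := y)
      (fun h => hxy (sup_eq_right.mp h))
  exact ⟨P, hP, hx, hy⟩

theorem le_of_forall_saturated {r : L → L → Prop}
    (h : ∀ P : Set L, IsPrimeFilter P → Saturated r P) {x y : L} (hxy : r x y) : x ≤ y := by
  by_contra hle
  obtain ⟨P, hP, hx, hy⟩ := exists_isPrimeFilter_of_not_le hle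
  exact hy (h P hP x y hxy hx)

theorem IsPrimeFilter.exists_superset_mem_of_pc_notMem {Q : Set L} (hQ : IsPrimeFilter Q)
    {x : L} (hx : pc x ∉ Q) : ∃ R : Set L, IsPrimeFilter R ∧ Q ⊆ R ∧ x ∈ R := by
  let c := LatticeCon.ofInfClosed hQ.1 fun _ ha _ hb => hQ.inf_mem_iff.mpr ⟨ha, hb⟩
  have hxbot : ¬ c.r (x ⊔ ⊥) ⊥ := fun ⟨q, hq, h⟩ =>
    hx (hQ.mem_of_le hq ((pc_iff x q).mp (by rwa [sup_bot_eq, bot_inf_eq] at h)))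
  obtain ⟨R, hR, hsat, hxR, -⟩ := exists_saturated_isPrimeFilter c hxbot
  exact ⟨R, hR, fun q hq => hsat ⊤ q ⟨q, hq, by rw [top_inf_eq, inf_idem]⟩ hR.top_mem, hxR⟩

theorem isPrimeFilter_sUnion {c : Set (Set L)} (hc : ∀ P ∈ c, IsPrimeFilter P)
    (hchain : IsChain (· ⊆ ·) c) (hne : c.Nonempty) : IsPrimeFilter (⋃₀ c) := by
  obtain ⟨P₀, hP₀⟩ := hne
  refine ⟨(hc P₀ hP₀).1.mono (Set.subset_sUnion_of_mem hP₀), fun h => ?_, ?_, ?_, ?_⟩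
  · obtain ⟨P, hP, hbot⟩ := h ▸ Set.mem_univ (⊥ : L)
    exact (hc P hP).bot_notMem hbot
  · rintro a b ⟨P, hP, ha⟩ hab
    exact ⟨P, hP, (hc P hP).mem_of_le ha hab⟩
  · rintro a b ⟨P, hP, ha⟩ ⟨Q, hQ, hb⟩
    rcases hchain.total hP hQ with hPQ | hQP
    · exact ⟨Q, hQ, (hc Q hQ).inf_mem_iff.mpr ⟨hPQ ha, hb⟩⟩
    · exact ⟨P, hP, (hc P hP).inf_mem_iff.mpr ⟨ha, hQP hb⟩⟩
  · rintro a b ⟨P, hP, hab⟩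
    exact ((hc P hP).sup_mem_iff.mp hab).imp (⟨P, hP, ·⟩) (⟨P, hP, ·⟩)

theorem IsPrimeFilter.exists_isMaximalPF_superset {Q : Set L} (hQ : IsPrimeFilter Q) :
    ∃ M : Set L, IsMaximalPF M ∧ Q ⊆ M := by
  obtain ⟨M, hQM, hM⟩ := zorn_subset_nonempty {R : Set L | IsPrimeFilter R ∧ Q ⊆ R}
    (fun c hc hchain hne => ⟨⋃₀ c, ⟨isPrimeFilter_sUnion (fun P hP => (hc hP).1) hchain hne,
      hne.elim fun P hP => (hc hP).2.trans (Set.subset_sUnion_of_mem hP)⟩,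
      fun _ => Set.subset_sUnion_of_mem⟩)
    Q ⟨hQ, subset_rfl⟩
  exact ⟨M, ⟨hM.1.1, fun R hR hMR => (hM.2 ⟨hR, hQM.trans hMR⟩ hMR).antisymm hMR⟩, hQM⟩

theorem IsMaximalPF.pc_mem_of_notMem {M : Set L} (hM : IsMaximalPF M) {y : L} (hy : y ∉ M) :
    pc y ∈ M := by
  by_contra h
  obtain ⟨R, hR, hMR, hyR⟩ := hM.1.exists_superset_mem_of_pc_notMem h
  exact hy (hM.2 R hR hMR ▸ hyR)

theorem IsMaximalPF.sup_pc_mem {M : Set L} (hM : IsMaximalPF M) (a : L) : a ⊔ pc a ∈ M :=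
  hM.1.sup_mem_iff.mpr ((em (a ∈ M)).imp_right hM.pc_mem_of_notMem)

theorem IsPrimeFilter.pc_mem_iff {Q : Set L} (hQ : IsPrimeFilter Q) {x : L} :
    pc x ∈ Q ↔ ∀ M : Set L, IsMaximalPF M → Q ⊆ M → x ∉ M := by
  refine ⟨fun hpc M hM hQM hx => hM.1.pc_notMem hx (hQM hpc), fun h => ?_⟩
  by_contra hpc
  obtain ⟨R, hR, hQR, hxR⟩ := hQ.exists_superset_mem_of_pc_notMem hpc
  obtain ⟨M, hM, hRM⟩ := hR.exists_isMaximalPF_superset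
  exact h M hM (hQR.trans hRM) (hRM hxR)

theorem IsPrimeFilter.exists_sup_pc_notMem {P : Set L} (hP : IsPrimeFilter P)
    (hmax : ¬ IsMaximalPF P) : ∃ a : L, a ⊔ pc a ∉ P := by
  obtain ⟨Q, hQ, hPQ, hne⟩ : ∃ Q, IsPrimeFilter Q ∧ P ⊆ Q ∧ Q ≠ P := by
    simpa [IsMaximalPF, hP] using hmax
  obtain ⟨a, haQ, haP⟩ := Set.exists_of_ssubset (hPQ.ssubset_of_ne hne.symm)
  refine ⟨a, fun h => (hP.sup_mem_iff.mp h).elim haP fun hpc => ?_⟩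
  exact hQ.pc_notMem haQ (hPQ hpc)

theorem IsCongruence.eq_top_of_bot_top {θ : L → L → Prop} (hθ : IsCongruence θ)
    (h : θ ⊥ ⊤) : θ = fun _ _ => True := by
  have hbot (u : L) : θ ⊥ u := by
    simpa only [inf_bot_eq, inf_top_eq] using hθ.2.1 u u ⊥ ⊤ (hθ.1.refl u) h
  funext u v
  exact eq_true (hθ.1.trans (hθ.1.symm (hbot u)) (hbot v))

def IsCongruence.toLatticeCon {θ : L → L → Prop} (hθ : IsCongruence θ) : LatticeCon L where
  r := θ
  iseqv := hθ.1
  inf := hθ.2.1 _ _ _ _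
  sup := hθ.2.2.1 _ _ _ _

theorem Saturated.phi {θ : L → L → Prop} (hθ : IsCongruence θ) {P : Set L}
    (hP : Saturated θ P) : Saturated θ (phi P) :=
  fun x y hxy hx hy => hx (hP _ _ (hθ.2.2.2.1 y x (hθ.1.symm hxy)) hy)

theorem IsMaximalPF.saturated_of_subset {θ : L → L → Prop} (hθ : IsCongruence θ) {P Q : Set L}
    (hQ : IsMaximalPF Q) (hP : IsPrimeFilter P) (hPs : Saturated θ P) (hPQ : P ⊆ Q) :
    Saturated θ Q := by
  obtain ⟨hequiv, hinf, -, -, hpc⟩ := hθ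
  intro x y hxy hx
  by_contra hy
  have hbot : θ (x ⊓ pc y) ⊥ := by
    simpa only [inf_pc_self] using hinf x y (pc y) (pc y) hxy (hequiv.refl _)
  have htop : pc (x ⊓ pc y) ∈ P :=
    hPs ⊤ _ (hequiv.symm (pc_bot (L := L) ▸ hpc _ _ hbot)) hP.top_mem
  exact hQ.1.pc_notMem (hQ.1.inf_mem_iff.mpr ⟨hx, hQ.pc_mem_of_notMem hy⟩) (hPQ htop)

theorem forall_saturated_of_phiConnected (hconn : PhiConnected L)
    (hL : ∀ P : Set L, IsPrimeFilter P → IsMaximalPF P ∨ IsMinimalPF P)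
    {θ : L → L → Prop} (hθ : IsCongruence θ) (hbt : ¬ θ ⊥ ⊤) :
    ∀ P : Set L, IsPrimeFilter P → Saturated θ P := by
  let Y : Set (Set L) := {P | IsPrimeFilter P ∧ Saturated θ P}
  have hne : Y.Nonempty := by
    obtain ⟨P, hP, hsat, -⟩ := exists_saturated_isPrimeFilter hθ.toLatticeCon (x := ⊤) (y := ⊥)
      fun h => hbt (hθ.1.symm (top_sup_eq (⊥ : L) ▸ h))
    exact ⟨P, hP, hsat⟩
  have hinv (P : Set L) (hP : P ∈ Y) : phi P ∈ Y := ⟨hP.1.phi, hP.2.phi hθ⟩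
  have hinc (P Q : Set L) (hP : P ∈ Y) (hQ : IsPrimeFilter Q) (hPQ : P ⊆ Q) : Q ∈ Y := by
    refine ⟨hQ, ?_⟩
    obtain rfl | hne := eq_or_ne P Q
    · exact hP.2
    have hQmax : IsMaximalPF Q := (hL Q hQ).resolve_right fun hmin => hne (hmin.2 P hP.1 hPQ)
    exact hQmax.saturated_of_subset hθ hP.1 hP.2 hPQ
  have hdec (P Q : Set L) (hP : P ∈ Y) (hQ : IsPrimeFilter Q) (hQP : Q ⊆ P) : Q ∈ Y :=
    phi_phi Q ▸ hinv _ (hinc _ _ (hinv P hP) hQ.phi (phi_subset_phi hQP))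
  have hY := hconn Y (fun _ hP => hP.1) hne hinc hdec hinv
  exact fun P hP => (hY ▸ hP : P ∈ Y).2

theorem simple_of_forall_isMaximalPF_or_isMinimalPF (hnt : (⊥ : L) ≠ ⊤) (hconn : PhiConnected L)
    (hL : ∀ P : Set L, IsPrimeFilter P → IsMaximalPF P ∨ IsMinimalPF P) : Simple L := by
  refine ⟨⟨⊥, ⊤, hnt⟩, fun θ hθ => ?_⟩
  by_cases hbt : θ ⊥ ⊤
  · exact Or.inr (hθ.eq_top_of_bot_top hbt)
  have hsat := forall_saturated_of_phiConnected hconn hL hθ hbt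
  refine Or.inl (funext fun u => funext fun v => propext ⟨fun h => ?_, fun h => h ▸ hθ.1.refl u⟩)
  exact le_antisymm (le_of_forall_saturated hsat h) (le_of_forall_saturated hsat (hθ.1.symm h))

def extremalCon (L : Type*) [PMAlgebra L] (u v : L) : Prop :=
  ∀ Q : Set L, IsMaximalPF Q ∨ IsMinimalPF Q → (u ∈ Q ↔ v ∈ Q)

theorem isCongruence_extremalCon : IsCongruence (extremalCon L) := by
  have prime {Q : Set L} (hQ : IsMaximalPF Q ∨ IsMinimalPF Q) : IsPrimeFilter Q :=
    hQ.elim (·.1) (·.1)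
  refine ⟨⟨fun _ _ _ => Iff.rfl, fun h Q hQ => (h Q hQ).symm,
    fun h h' Q hQ => (h Q hQ).trans (h' Q hQ)⟩, ?_, ?_, ?_, ?_⟩
  · intro a b c d h h' Q hQ
    rw [(prime hQ).inf_mem_iff, (prime hQ).inf_mem_iff, h Q hQ, h' Q hQ]
  · intro a b c d h h' Q hQ
    rw [(prime hQ).sup_mem_iff, (prime hQ).sup_mem_iff, h Q hQ, h' Q hQ]
  · intro a b h Q hQ
    exact not_iff_not.mp (h (phi Q) (hQ.symm.imp IsMinimalPF.phi IsMaximalPF.phi))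
  · intro a b h Q hQ
    simp only [(prime hQ).pc_mem_iff]
    exact forall₃_congr fun M hM _ => not_congr (h M (Or.inl hM))

theorem extremalCon_inf_sup_pc (a b : L) :
    extremalCon L (dm (b ⊔ pc b) ⊓ (a ⊔ pc a)) (dm (b ⊔ pc b)) := by
  intro Q hQ
  refine ⟨fun h => ?_, fun h => ?_⟩
  · exact (hQ.elim (·.1) (·.1)).inf_mem_iff.mp h |>.1
  rcases hQ with hmax | hmin
  · exact hmax.1.inf_mem_iff.mpr ⟨h, hmax.sup_pc_mem a⟩
  · exact absurd h (hmin.phi.sup_pc_mem b)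

theorem Simple.isMaximalPF_or_isMinimalPF (hs : Simple L) {P : Set L} (hP : IsPrimeFilter P) :
    IsMaximalPF P ∨ IsMinimalPF P := by
  by_contra! ⟨hmax, hmin⟩
  obtain ⟨a, ha⟩ := hP.exists_sup_pc_notMem hmax
  obtain ⟨b, hb⟩ := hP.phi.exists_sup_pc_notMem fun h => hmin (phi_phi P ▸ h.phi)
  rw [mem_phi, not_not] at hb
  obtain ⟨M, hM, -⟩ := hP.exists_isMaximalPF_superset
  rcases hs.2 _ isCongruence_extremalCon with h | h
  · have hle := extremalCon_inf_sup_pc a b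
    simp only [h] at hle
    exact ha (hP.mem_of_le hb (inf_eq_left.mp hle))
  · have hbt : extremalCon L ⊥ ⊤ := h ▸ trivial
    exact hM.1.bot_notMem ((hbt M (Or.inl hM)).mpr hM.1.top_mem)

end PMAlgebra

open PMAlgebra

/-- A φ-connected nontrivial pm-algebra is simple iff every prime filter is
maximal or minimal. -/
theorem simple_iff_every_prime_filter_max_or_min {L : Type*} [PMAlgebra L]
    (hnt : (⊥ : L) ≠ ⊤) (hconn : PhiConnected L) :
    Simple L ↔ ∀ P : Set L, IsPrimeFilter P → IsMaximalPF P ∨ IsMinimalPF P :=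
  ⟨fun hs _ hP => hs.isMaximalPF_or_isMinimalPF hP,
    simple_of_forall_isMaximalPF_or_isMinimalPF hnt hconn⟩
end
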